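/- Let T be a beer graph whose underlying graph is a tree (finite, connected and acyclic), with nonempty beer-store set B. For all vertices u and v, letting P denote the set of vertices on the unique simple path in T from u to v, dist_B(u,v) = dist(u,v) + 2 · min_{b ∈ B} min_{x ∈ P} dist(b,x). That is, in a beer tree the shortest beer walk follows the u–v path and makes one detour, traversed twice, to the beer store closest to that path. -/

import Mathlib

/-!
A beer walk through a store `b` has weight at least `dist(u,b) + dist(b,v)`. In a tree, let `x`
be the first vertex of the `u`–`v` path `p` met by the path from `b` to `u`: the path from `b` to
`x` followed by the part of `p` after `x` is then the path from `b` to `v`, and the path from `x`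
back to `u` is at least as heavy as the part of `p` before `x`, so
`dist(u,b) + dist(b,v) ≥ dist(u,v) + 2 dist(b,x)`. Conversely, following `p` to `x`, going to `b`
and back and finishing along `p` is a beer walk of exactly that weight.
-/

open scoped ENNReal

/-- The weight of a walk: the sum, with multiplicity, of the weights of its edges. -/
noncomputable def walkWeight {V : Type*} (ω : V → V → ℝ≥0∞) {G : SimpleGraph V}
    {u v : V} (p : G.Walk u v) : ℝ≥0∞ :=
  (p.darts.map fun d => ω d.toProd.1 d.toProd.2).sum

/-- The (weighted) distance: the infimum in ℝ≥0∞ of the weights of all walks. -/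
noncomputable def gDist {V : Type*} (G : SimpleGraph V) (ω : V → V → ℝ≥0∞) (u v : V) : ℝ≥0∞ :=
  ⨅ p : G.Walk u v, walkWeight ω p

/-- The beer distance: the infimum in ℝ≥0∞ of the weights of all walks visiting
a vertex of `B`. -/
noncomputable def beerDist {V : Type*} (G : SimpleGraph V) (ω : V → V → ℝ≥0∞)
    (B : Set V) (u v : V) : ℝ≥0∞ :=
  ⨅ (p : G.Walk u v) (_ : ∃ b ∈ B, b ∈ p.support), walkWeight ω p

open SimpleGraph Walk

section WalkWeight

variable {V : Type*} {G : SimpleGraph V} {ω : V → V → ℝ≥0∞}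

theorem walkWeight_append {u v w : V} (p : G.Walk u v) (q : G.Walk v w) :
    walkWeight ω (p.append q) = walkWeight ω p + walkWeight ω q := by
  simp [walkWeight, darts_append]

theorem walkWeight_reverse (hsymm : ∀ a b, ω a b = ω b a) {u v : V} (p : G.Walk u v) :
    walkWeight ω p.reverse = walkWeight ω p := by
  simp only [walkWeight, darts_reverse, List.map_reverse, List.sum_reverse, List.map_map]
  congr 2
  funext d
  exact hsymm _ _

theorem walkWeight_bypass_le [DecidableEq V] {u v : V} (p : G.Walk u v) :
    walkWeight ω p.bypass ≤ walkWeight ω p :=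
  (p.darts_bypass_sublist_darts.map _).sum_le_sum fun _ _ => zero_le

theorem gDist_le_walkWeight {u v : V} (p : G.Walk u v) : gDist G ω u v ≤ walkWeight ω p :=
  iInf_le _ p

theorem gDist_comm (hsymm : ∀ a b, ω a b = ω b a) (u v : V) :
    gDist G ω u v = gDist G ω v u := by
  have key : ∀ a c : V, gDist G ω c a ≤ gDist G ω a c := fun a c =>
    le_iInf fun q => (gDist_le_walkWeight q.reverse).trans_eq (walkWeight_reverse hsymm q)
  exact le_antisymm (key v u) (key u v)

theorem gDist_eq_top_of_not_reachable {u v : V} (h : ¬G.Reachable u v) : gDist G ω u v = ⊤ :=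
  haveI : IsEmpty (G.Walk u v) := not_nonempty_iff.mp h
  iInf_of_empty _

theorem SimpleGraph.IsAcyclic.gDist_eq_walkWeight (hG : G.IsAcyclic) {u v : V}
    {p : G.Walk u v} (hp : p.IsPath) : gDist G ω u v = walkWeight ω p := by
  classical
  refine le_antisymm (gDist_le_walkWeight p) (le_iInf fun q => ?_)
  have hq : q.bypass = p :=
    congrArg Subtype.val ((hG.subsingleton_path u v).elim ⟨q.bypass, q.bypass_isPath⟩ ⟨p, hp⟩)
  exact hq ▸ walkWeight_bypass_le q

end WalkWeight

namespace SimpleGraph.Walk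

variable {V : Type*} {G : SimpleGraph V}

theorem IsPath.append {u v w : V} {p : G.Walk u v} {q : G.Walk v w} (hp : p.IsPath)
    (hq : q.IsPath) (h : ∀ y ∈ p.support, y ∈ q.support → y = v) : (p.append q).IsPath := by
  have hq' := hq.support_nodup
  rw [← cons_tail_support, List.nodup_cons] at hq'
  rw [isPath_def, support_append, List.nodup_append]
  refine ⟨hp.support_nodup, hq'.2, fun y hy z hz hyz => ?_⟩
  subst hyz
  exact hq'.1 (h y hy (List.mem_of_mem_tail hz) ▸ hz)

theorem exists_eq_append_first_mem {u v : V} (S : Set V) (p : G.Walk u v) (hv : v ∈ S) :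
    ∃ x ∈ S, ∃ (p₁ : G.Walk u x) (p₂ : G.Walk x v),
      p = p₁.append p₂ ∧ ∀ y ∈ p₁.support, y ∈ S → y = x := by
  induction p with
  | nil => exact ⟨_, hv, nil, nil, rfl, by simp⟩
  | @cons u w v h p ih =>
    by_cases hu : u ∈ S
    · exact ⟨u, hu, nil, cons h p, rfl, by simp⟩
    obtain ⟨x, hx, p₁, p₂, rfl, hfirst⟩ := ih hv
    refine ⟨x, hx, cons h p₁, p₂, rfl, fun y hy hyS => ?_⟩
    rw [support_cons, List.mem_cons] at hy
    rcases hy with rfl | hy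
    · exact absurd hyS hu
    · exact hfirst y hy hyS

end SimpleGraph.Walk

section BeerDist

variable {V : Type*} {G : SimpleGraph V} {ω : V → V → ℝ≥0∞} {B : Set V}

theorem iInf_gDist_add_gDist_le_beerDist {u v : V} :
    ⨅ b ∈ B, (gDist G ω u b + gDist G ω b v) ≤ beerDist G ω B u v := by
  classical
  refine le_iInf₂ fun q ⟨b, hb, hbq⟩ => ?_
  calc ⨅ b ∈ B, (gDist G ω u b + gDist G ω b v)
      ≤ gDist G ω u b + gDist G ω b v := iInf₂_le b hb
    _ ≤ walkWeight ω (q.takeUntil b hbq) + walkWeight ω (q.dropUntil b hbq) :=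
        add_le_add (gDist_le_walkWeight _) (gDist_le_walkWeight _)
    _ = walkWeight ω q := by rw [← walkWeight_append, take_spec]

theorem beerDist_le_walkWeight_add_two_mul_gDist (hsymm : ∀ a b, ω a b = ω b a) {u v b x : V}
    (p : G.Walk u v) (hb : b ∈ B) (hx : x ∈ p.support) :
    beerDist G ω B u v ≤ walkWeight ω p + 2 * gDist G ω b x := by
  classical
  rw [gDist, ENNReal.mul_iInf_of_ne two_ne_zero ENNReal.ofNat_ne_top, ENNReal.add_iInf]
  refine le_iInf fun t => ?_
  let q := (p.takeUntil x hx).append (t.reverse.append (t.append (p.dropUntil x hx)))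
  have hbq : b ∈ q.support := by simp [q]
  calc beerDist G ω B u v ≤ walkWeight ω q := iInf₂_le q ⟨b, hb, hbq⟩
    _ = walkWeight ω p + 2 * walkWeight ω t := by
      conv_rhs => rw [← p.take_spec hx]
      simp only [q, walkWeight_append, walkWeight_reverse hsymm]
      ring

theorem SimpleGraph.IsAcyclic.exists_mem_support_walkWeight_add_two_mul_gDist_le
    (hG : G.IsAcyclic) (hsymm : ∀ a b, ω a b = ω b a) {u v : V} {p : G.Walk u v}
    (hp : p.IsPath) (b : V) :
    ∃ x ∈ p.support, walkWeight ω p + 2 * gDist G ω b x ≤ gDist G ω u b + gDist G ω b v := by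
  classical
  by_cases hreach : G.Reachable u b
  swap
  · exact ⟨u, p.start_mem_support, by simp [gDist_eq_top_of_not_reachable hreach]⟩
  obtain ⟨x, hx, r₁, r₂, hr, hfirst⟩ :=
    hreach.symm.some.bypass.exists_eq_append_first_mem {y | y ∈ p.support} p.start_mem_support
  have hr_path : (r₁.append r₂).IsPath := hr ▸ bypass_isPath _
  have hbv : (r₁.append (p.dropUntil x hx)).IsPath :=
    hr_path.of_append_left.append (hp.dropUntil hx) fun y hy hy' =>
      hfirst y hy (p.support_dropUntil_subset_support hx hy')
  have htake : walkWeight ω (p.takeUntil x hx) ≤ walkWeight ω r₂ := by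
    rw [hG.gDist_eq_walkWeight (hp.takeUntil hx) |>.symm, ← walkWeight_reverse hsymm r₂]
    exact gDist_le_walkWeight _
  refine ⟨x, hx, ?_⟩
  calc walkWeight ω p + 2 * gDist G ω b x
      = walkWeight ω (p.takeUntil x hx) + walkWeight ω (p.dropUntil x hx)
          + 2 * gDist G ω b x := by rw [← walkWeight_append, take_spec]
    _ ≤ walkWeight ω r₂ + walkWeight ω (p.dropUntil x hx) + 2 * walkWeight ω r₁ := by
      gcongr
      exact gDist_le_walkWeight r₁
    _ = walkWeight ω (r₁.append r₂) + walkWeight ω (r₁.append (p.dropUntil x hx)) := by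
      simp only [walkWeight_append]
      ring
    _ = gDist G ω u b + gDist G ω b v := by
      rw [gDist_comm hsymm u b, hG.gDist_eq_walkWeight hr_path, hG.gDist_eq_walkWeight hbv]

end BeerDist

theorem beerDist_in_tree_general {V : Type*}
    (G : SimpleGraph V) (ω : V → V → ℝ≥0∞) (B : Set V)
    (hsymm : ∀ a b, ω a b = ω b a)
    (htree : G.IsTree)
    (u v : V) (p : G.Walk u v) (hp : p.IsPath) :
    beerDist G ω B u v =
      gDist G ω u v + 2 * ⨅ b ∈ B, ⨅ x ∈ p.support, gDist G ω b x := by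
  rw [htree.isAcyclic.gDist_eq_walkWeight hp]
  refine le_antisymm ?_ ?_
  · simp only [ENNReal.mul_iInf_of_ne two_ne_zero ENNReal.ofNat_ne_top, ENNReal.add_iInf]
    exact le_iInf₂ fun b hb => le_iInf₂ fun x hx =>
      beerDist_le_walkWeight_add_two_mul_gDist hsymm p hb hx
  · refine le_trans (le_iInf₂ fun b hb => ?_) iInf_gDist_add_gDist_le_beerDist
    obtain ⟨x, hx, hle⟩ :=
      htree.isAcyclic.exists_mem_support_walkWeight_add_two_mul_gDist_le hsymm hp b
    refine le_trans ?_ hle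
    gcongr
    exact iInf₂_le_of_le b hb (iInf₂_le x hx)

/-- In a beer tree with a nonempty set of beer stores, the beer distance
between u and v equals dist(u,v) plus twice the smallest distance from a beer store to a
vertex on the unique simple path from u to v. -/
theorem beerDist_in_tree {V : Type*} [Fintype V] [DecidableEq V]
    (G : SimpleGraph V) (ω : V → V → ℝ≥0∞) (B : Set V)
    (hsymm : ∀ a b, ω a b = ω b a)
    (hpos : ∀ a b, G.Adj a b → 0 < ω a b ∧ ω a b < ⊤)
    (htree : G.IsTree) (hB : B.Nonempty)
    (u v : V) (p : G.Walk u v) (hp : p.IsPath) :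
    beerDist G ω B u v =
      gDist G ω u v + 2 * ⨅ b ∈ B, ⨅ x ∈ p.support, gDist G ω b x :=
  beerDist_in_tree_general G ω B hsymm htree u v p hp
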